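/- arXiv:1507.06271 — 3 statements merged into one kernel-verified Lean document; each statement's English description precedes it below -/
import Mathlib

section
/- Let A₀, B₀, C₀, A, B, C, D be vector spaces over ℚ. Let f₀ : A₀ → B₀ and g₀ : B₀ → C₀ be ℚ-linear maps with ker g₀ ⊆ range f₀, and let f : A → B and g : B → C be ℚ-linear maps with ker g ⊆ range f. Let p : A₀ → B, χ : B₀ → B, t : B₀ → C, t' : B₀ → D and h : B → D be ℚ-linear maps such that h ∘ f factors through a complex pair (i.e. h ∘ f = g₁ ∘ f₁ ∘ t₁ for some ℚ-linear maps t₁, f₁, g₁ with g₁ ∘ f₁ = 0), g ∘ p = t ∘ f₀, and h ∘ p = t' ∘ f₀. Then for every x ∈ B₀ with g₀ x = 0 and g (χ x) = t x, one has h (χ x) = t' x. -/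
universe u

/-- Axiom scheme E3 semantically: given two exact pairs `(f₀, g₀)` and `(f, g)`,
maps `p, χ, t, t', h` such that `h ∘ f` factors through a complex pair,
`g ∘ p = t ∘ f₀` and `h ∘ p = t' ∘ f₀`, every `x` with `g₀ x = 0` and
`g (χ x) = t x` satisfies `h (χ x) = t' x`. -/
theorem scheme_E3 (A₀ B₀ C₀ A B C D : Type u)
    [AddCommGroup A₀] [Module ℚ A₀] [AddCommGroup B₀] [Module ℚ B₀]
    [AddCommGroup C₀] [Module ℚ C₀] [AddCommGroup A] [Module ℚ A]
    [AddCommGroup B] [Module ℚ B] [AddCommGroup C] [Module ℚ C]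
    [AddCommGroup D] [Module ℚ D]
    (f₀ : A₀ →ₗ[ℚ] B₀) (g₀ : B₀ →ₗ[ℚ] C₀)
    (hexact₀ : LinearMap.ker g₀ ≤ LinearMap.range f₀)
    (f : A →ₗ[ℚ] B) (g : B →ₗ[ℚ] C)
    (hexact : LinearMap.ker g ≤ LinearMap.range f)
    (p : A₀ →ₗ[ℚ] B) (χ : B₀ →ₗ[ℚ] B) (t : B₀ →ₗ[ℚ] C) (t' : B₀ →ₗ[ℚ] D)
    (h : B →ₗ[ℚ] D)
    (hfactor : ∃ (A₁ B₁ : Type u) (_ : AddCommGroup A₁) (_ : Module ℚ A₁)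
      (_ : AddCommGroup B₁) (_ : Module ℚ B₁)
      (t₁ : A →ₗ[ℚ] A₁) (f₁ : A₁ →ₗ[ℚ] B₁) (g₁ : B₁ →ₗ[ℚ] D),
      g₁ ∘ₗ f₁ = 0 ∧ h ∘ₗ f = g₁ ∘ₗ f₁ ∘ₗ t₁)
    (hgp : g ∘ₗ p = t ∘ₗ f₀) (hhp : h ∘ₗ p = t' ∘ₗ f₀) :
    ∀ x : B₀, g₀ x = 0 → g (χ x) = t x → h (χ x) = t' x := by
  intro x hx hgx
  obtain ⟨a, ha⟩ := hexact₀ (LinearMap.mem_ker.mpr hx)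
  have hker : χ x - p a ∈ LinearMap.ker g := by
    have h1 : g (p a) = t (f₀ a) := LinearMap.congr_fun hgp a
    simp [LinearMap.mem_ker, hgx, h1, ha]
  obtain ⟨b, hb⟩ := hexact hker
  obtain ⟨A₁, B₁, _, _, _, _, t₁, f₁, g₁, hc, hf⟩ := hfactor
  have hfb : h (f b) = 0 := by
    have := LinearMap.congr_fun hf b
    simp only [LinearMap.comp_apply] at this
    rw [this, ← LinearMap.comp_apply g₁ f₁, hc]; rfl
  have hpa : h (p a) = t' (f₀ a) := LinearMap.congr_fun hhp a
  have : h (χ x - p a) = 0 := by rw [← hb, hfb]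
  rw [map_sub, sub_eq_zero] at this
  rw [this, hpa, ha]
end

section
/- Let K be a field and V a K-vector space. Then V is homogeneous if and only if V is infinite-dimensional over K. -/
universe u v

/-- A `K`-vector space `V` is homogeneous if for all finite-dimensional `K`-vector
spaces `W₀`, `W₁`, every injective `K`-linear map `j : W₀ → W₁` and every injective
`K`-linear map `χ : W₀ → V` admit an injective `K`-linear map `u : W₁ → V` with
`u ∘ j = χ`. -/
def IsHomogeneousVectorSpace (K : Type u) (V : Type u) [Field K]
    [AddCommGroup V] [Module K V] : Prop :=
  ∀ (W₀ W₁ : Type u) [AddCommGroup W₀] [Module K W₀] [AddCommGroup W₁] [Module K W₁],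
    FiniteDimensional K W₀ → FiniteDimensional K W₁ →
      ∀ (j : W₀ →ₗ[K] W₁) (χ : W₀ →ₗ[K] V),
        Function.Injective j → Function.Injective χ →
          ∃ u : W₁ →ₗ[K] V, Function.Injective u ∧ ∀ w, u (j w) = χ w

/-!
Extending `χ` along `j` injectively amounts to embedding a complement of `range j` into a
complement of `range χ`. When `V` is infinite-dimensional the latter complement is
infinite-dimensional, so any finite-dimensional space embeds into it. Conversely, if `V` is
finite-dimensional, the identity of `V` cannot extend to an injective map `V × K → V`.
-/

namespace LinearMap

variable {R E F : Type*} [Ring R] [AddCommGroup E] [Module R E] [AddCommGroup F] [Module R F]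
  {p q : Submodule R E}

theorem injective_ofIsCompl (h : IsCompl p q) {φ : p →ₗ[R] F} {ψ : q →ₗ[R] F}
    (hφ : Function.Injective φ) (hψ : Function.Injective ψ)
    (hdisj : Disjoint (range φ) (range ψ)) : Function.Injective (ofIsCompl h φ ψ) := by
  have hker : ker (coprod φ ψ) = ⊥ := by
    rw [ker_coprod_of_disjoint_range φ ψ hdisj, ker_eq_bot.mpr hφ, ker_eq_bot.mpr hψ,
      Submodule.prod_bot]
  exact (ker_eq_bot.mp hker).comp (Submodule.prodEquivOfIsCompl p q h).symm.injective

end LinearMap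

section Extension

variable {K : Type*} [DivisionRing K] {W₀ : Type*} {W₁ V : Type v}
  [AddCommGroup W₀] [Module K W₀] [AddCommGroup W₁] [Module K W₁] [AddCommGroup V] [Module K V]

theorem LinearMap.exists_injective_comp_eq_of_rank_quotient_le {j : W₀ →ₗ[K] W₁}
    {χ : W₀ →ₗ[K] V} (hj : Function.Injective j) (hχ : Function.Injective χ)
    (hrank : Module.rank K (W₁ ⧸ range j) ≤ Module.rank K (V ⧸ range χ)) :
    ∃ u : W₁ →ₗ[K] V, Function.Injective u ∧ u ∘ₗ j = χ := by
  obtain ⟨C, hC⟩ := (range j).exists_isCompl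
  obtain ⟨D, hD⟩ := (range χ).exists_isCompl
  obtain ⟨f, hf⟩ : ∃ f : C →ₗ[K] D, Function.Injective f := by
    rw [← rank_le_iff_exists_linearMap, ← (Submodule.quotientEquivOfIsCompl _ _ hC).rank_eq,
      ← (Submodule.quotientEquivOfIsCompl _ _ hD).rank_eq]
    exact hrank
  let e := LinearEquiv.ofInjective j hj
  have hdisj : Disjoint (range (χ ∘ₗ e.symm.toLinearMap)) (range (D.subtype ∘ₗ f)) :=
    hD.disjoint.mono (range_comp_le_range _ _)
      ((range_comp_le_range _ _).trans D.range_subtype.le)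
  refine ⟨ofIsCompl hC (χ ∘ₗ e.symm.toLinearMap) (D.subtype ∘ₗ f),
    injective_ofIsCompl hC (hχ.comp e.symm.injective) (D.injective_subtype.comp hf) hdisj, ?_⟩
  ext w
  rw [coe_comp, Function.comp_apply, ← LinearEquiv.ofInjective_apply j (h := hj) w,
    ofIsCompl_apply_left]
  simp [e]

end Extension

theorem Submodule.aleph0_le_rank_quotient {K V : Type*} [DivisionRing K] [AddCommGroup V]
    [Module K V] (hV : ¬ FiniteDimensional K V) (p : Submodule K V) [FiniteDimensional K p] :
    Cardinal.aleph0 ≤ Module.rank K (V ⧸ p) := by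
  rw [← not_lt, Module.rank_lt_aleph0_iff]
  exact fun _ ↦ hV (Module.Finite.of_submodule_quotient p)

theorem IsHomogeneousVectorSpace.not_finiteDimensional {K V : Type u} [Field K]
    [AddCommGroup V] [Module K V] (hV : IsHomogeneousVectorSpace K V) :
    ¬ FiniteDimensional K V := by
  intro hfin
  obtain ⟨u, hu, -⟩ := hV V (V × K) hfin inferInstance (LinearMap.inl K V K) LinearMap.id
    LinearMap.inl_injective Function.injective_id
  have hle := LinearMap.finrank_le_finrank_of_injective hu
  rw [Module.finrank_prod, Module.finrank_self] at hle
  omega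

theorem isHomogeneousVectorSpace_of_not_finiteDimensional {K V : Type u} [Field K]
    [AddCommGroup V] [Module K V] (hV : ¬ FiniteDimensional K V) :
    IsHomogeneousVectorSpace K V := by
  intro W₀ W₁ _ _ _ _ _ _ j χ hj hχ
  have hrank : Module.rank K (W₁ ⧸ LinearMap.range j) ≤ Module.rank K (V ⧸ LinearMap.range χ) :=
    (Module.rank_lt_aleph0 K _).le.trans (Submodule.aleph0_le_rank_quotient hV _)
  obtain ⟨u, hu, huj⟩ := LinearMap.exists_injective_comp_eq_of_rank_quotient_le hj hχ hrank
  exact ⟨u, hu, LinearMap.congr_fun huj⟩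

/-- A `K`-vector space is homogeneous if and only if it is infinite-dimensional
over `K`. -/
theorem homogeneousVectorSpace_iff (K V : Type u) [Field K]
    [AddCommGroup V] [Module K V] :
    IsHomogeneousVectorSpace K V ↔ ¬ FiniteDimensional K V :=
  ⟨IsHomogeneousVectorSpace.not_finiteDimensional,
    isHomogeneousVectorSpace_of_not_finiteDimensional⟩
end

section
/- Let B be a Boolean algebra. Then B is atomless (has no atoms) if and only if for all finite Boolean algebras C and D, every injective bounded lattice homomorphism f : C → D and every injective bounded lattice homomorphism χ : C → B admit an injective bounded lattice homomorphism u : D → B with u ∘ f = χ. -/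
/-!
Atomless ⇒ homogeneous. A join-preserving map out of a finite Boolean algebra `D` is determined
by the images `p d` of the atoms `d` of `D`; conversely, if the `p d` are pairwise disjoint and
nonzero, then `x ↦ ⨆ p d` over the atoms `d ≤ x` is an injective lattice homomorphism. Every atom
`d` of `D` lies below `f c` for exactly one atom `c` of `C`, so it suffices to split each `χ c`
into nonzero disjoint pieces, one for each atom below `f c`; atomlessness allows any finite
number of pieces.

Homogeneous ⇒ atomless. An atom `b` lies in the finite subalgebra `L = {⊥, b, bᶜ, ⊤}`. Extending
the inclusion of `L` along the diagonal `L → L × L` gives an injective `u` with `u (b, b) = b`,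
and then `u (b, ⊥)` and `u (⊥, b)` are distinct nonzero elements below the atom `b`.
-/

universe u

open Function

theorem IsAtom.supPrime {α : Type*} [DistribLattice α] [OrderBot α] {a : α} (ha : IsAtom a) :
    SupPrime a := by
  refine ⟨fun h => ha.ne_bot h.eq_bot, fun b c hbc => ?_⟩
  by_contra! h
  have hdisj : Disjoint a (b ⊔ c) :=
    disjoint_sup_right.2 ⟨ha.not_le_iff_disjoint.1 h.1, ha.not_le_iff_disjoint.1 h.2⟩
  exact ha.ne_bot (hdisj.eq_bot_of_le hbc)

section AtomsBelow

variable {α : Type*} [BooleanAlgebra α] [Finite α] {a x y : α}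

noncomputable def atomsBelow (x : α) : Finset α :=
  (Set.toFinite {a | IsAtom a ∧ a ≤ x}).toFinset

@[simp]
lemma mem_atomsBelow : a ∈ atomsBelow x ↔ IsAtom a ∧ a ≤ x :=
  Set.Finite.mem_toFinset _

lemma atomsBelow_nonempty (hx : x ≠ ⊥) : (atomsBelow x).Nonempty := by
  obtain ⟨a, ha, hax⟩ := (eq_bot_or_exists_atom_le x).resolve_left hx
  exact ⟨a, mem_atomsBelow.2 ⟨ha, hax⟩⟩

@[simp]
lemma atomsBelow_bot : atomsBelow (⊥ : α) = ∅ := by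
  ext a
  simp only [mem_atomsBelow, le_bot_iff, Finset.notMem_empty, iff_false, not_and]
  exact fun ha => ha.ne_bot

lemma atomsBelow_sup [DecidableEq α] (x y : α) :
    atomsBelow (x ⊔ y) = atomsBelow x ∪ atomsBelow y := by
  ext a
  by_cases ha : IsAtom a
  · simp [ha, ha.supPrime.le_sup]
  · simp [ha]

lemma atomsBelow_mono (hxy : x ≤ y) : atomsBelow x ⊆ atomsBelow y :=
  fun _ ha => mem_atomsBelow.2 ⟨(mem_atomsBelow.1 ha).1, (mem_atomsBelow.1 ha).2.trans hxy⟩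

@[simp]
lemma sup_atomsBelow (x : α) : (atomsBelow x).sup id = x :=
  le_antisymm (Finset.sup_le fun _ ha => (mem_atomsBelow.1 ha).2)
    (BooleanAlgebra.le_iff_atom_le_imp.2 fun _ ha hax =>
      Finset.le_sup (f := id) (mem_atomsBelow.2 ⟨ha, hax⟩))

lemma apply_eq_apply_of_forall_isAtom {β F G : Type*} [SemilatticeSup β] [OrderBot β]
    [FunLike F α β] [SupBotHomClass F α β] [FunLike G α β] [SupBotHomClass G α β] {g : F} {h : G}
    (hgh : ∀ a, IsAtom a → g a = h a) (x : α) : g x = h x := by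
  rw [← sup_atomsBelow x, map_finset_sup, map_finset_sup]
  exact Finset.sup_congr rfl fun a ha => hgh a (mem_atomsBelow.1 ha).1

end AtomsBelow

namespace SupBotHom

variable {α β : Type*} [BooleanAlgebra α] [Finite α] {a x y : α}

noncomputable def ofAtoms [SemilatticeSup β] [OrderBot β] (p : α → β) : SupBotHom α β where
  toFun x := (atomsBelow x).sup p
  map_sup' x y := by classical rw [atomsBelow_sup, Finset.sup_union]
  map_bot' := by rw [atomsBelow_bot, Finset.sup_empty]

lemma ofAtoms_apply [SemilatticeSup β] [OrderBot β] (p : α → β) (x : α) :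
    ofAtoms p x = (atomsBelow x).sup p :=
  rfl

variable [DistribLattice β] [OrderBot β] {p : α → β}

lemma disjoint_ofAtoms (hp : {a : α | IsAtom a}.PairwiseDisjoint p) (ha : IsAtom a)
    (hax : ¬a ≤ x) : Disjoint (p a) (ofAtoms p x) :=
  Finset.disjoint_sup_right.2 fun _ hb => hp ha (mem_atomsBelow.1 hb).1
    fun hab => hax (hab ▸ (mem_atomsBelow.1 hb).2)

lemma ofAtoms_inf (hp : {a : α | IsAtom a}.PairwiseDisjoint p) (x y : α) :
    ofAtoms p (x ⊓ y) = ofAtoms p x ⊓ ofAtoms p y := by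
  refine le_antisymm (le_inf (Finset.sup_mono (atomsBelow_mono inf_le_left))
    (Finset.sup_mono (atomsBelow_mono inf_le_right))) ?_
  rw [ofAtoms_apply p x, Finset.sup_inf_distrib_right]
  refine Finset.sup_le fun a ha => ?_
  obtain ⟨ha, hax⟩ := mem_atomsBelow.1 ha
  by_cases hay : a ≤ y
  · exact inf_le_left.trans (Finset.le_sup (mem_atomsBelow.2 ⟨ha, le_inf hax hay⟩))
  · exact (disjoint_ofAtoms hp ha hay).eq_bot.le.trans bot_le

lemma le_ofAtoms_iff (hp : {a : α | IsAtom a}.PairwiseDisjoint p)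
    (hp0 : ∀ a, IsAtom a → p a ≠ ⊥) (ha : IsAtom a) : p a ≤ ofAtoms p x ↔ a ≤ x := by
  refine ⟨fun h => ?_, fun hax => Finset.le_sup (mem_atomsBelow.2 ⟨ha, hax⟩)⟩
  by_contra hax
  exact hp0 a ha ((disjoint_ofAtoms hp ha hax).eq_bot_of_le h)

lemma ofAtoms_injective (hp : {a : α | IsAtom a}.PairwiseDisjoint p)
    (hp0 : ∀ a, IsAtom a → p a ≠ ⊥) : Injective (ofAtoms p) :=
  fun x y hxy => BooleanAlgebra.eq_iff_atom_le_iff.2 fun a ha => by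
    rw [← le_ofAtoms_iff hp hp0 ha, hxy, le_ofAtoms_iff hp hp0 ha]

end SupBotHom

lemma exists_pairwiseDisjoint_sup_eq {B : Type*} [BooleanAlgebra B] (hB : ∀ b : B, ¬IsAtom b)
    {ι : Type*} [DecidableEq ι] {s : Finset ι} (hs : s.Nonempty) {b : B} (hb : b ≠ ⊥) :
    ∃ g : ι → B, (∀ i ∈ s, g i ≠ ⊥) ∧ (s : Set ι).PairwiseDisjoint g ∧ s.sup g = b := by
  induction hs using Finset.Nonempty.cons_induction generalizing b with
  | singleton i => exact ⟨fun _ => b, by simpa using hb, by simp, by simp⟩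
  | cons i s hi hs ih =>
    obtain ⟨x, hxb, hx⟩ : ∃ x < b, x ≠ ⊥ := by simpa [IsAtom, hb] using hB b
    obtain ⟨g, hg0, hgd, hgs⟩ := ih hx
    have hgi : ∀ j ∈ s, update g i (b \ x) j = g j := fun j hj =>
      update_of_ne (ne_of_mem_of_not_mem hj hi) _ _
    refine ⟨update g i (b \ x), ?_, ?_, ?_⟩
    · simp only [Finset.mem_cons, forall_eq_or_imp, update_self]
      exact ⟨sdiff_eq_bot_iff.not.2 hxb.not_ge, fun j hj => hgi j hj ▸ hg0 j hj⟩
    · rw [Finset.coe_cons]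
      refine (hgd.mono_on fun j hj => (hgi j hj).le).insert fun j hj _ => ?_
      rw [update_self, hgi j hj]
      exact disjoint_sdiff_self_left.mono_right (hgs ▸ Finset.le_sup hj)
    · rw [Finset.sup_cons, update_self, Finset.sup_congr rfl hgi, hgs, sdiff_sup_cancel hxb.le]

lemma exists_isAtom_le_map {C D : Type*} [BooleanAlgebra C] [Finite C] [DistribLattice D]
    [BoundedOrder D] (f : BoundedLatticeHom C D) {d : D} (hd : IsAtom d) :
    ∃ c, IsAtom c ∧ d ≤ f c := by
  have hd_le : d ≤ f ((atomsBelow ⊤).sup id) := by rw [sup_atomsBelow, map_top]; exact le_top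
  obtain ⟨c, hc, hdc⟩ := (hd.supPrime.le_finset_sup).1 (map_finset_sup f _ _ ▸ hd_le)
  exact ⟨c, (mem_atomsBelow.1 hc).1, hdc⟩

lemma eq_of_le_map_of_le_map {C D : Type*} [Lattice C] [BoundedOrder C] [Lattice D]
    [BoundedOrder D] (f : BoundedLatticeHom C D) {d : D} (hd : IsAtom d) {c c' : C}
    (hc : IsAtom c) (hc' : IsAtom c') (hdc : d ≤ f c) (hdc' : d ≤ f c') : c = c' := by
  by_contra hne
  exact hd.ne_bot (disjoint_self.1 (((hc.disjoint_of_ne hc' hne).map f).mono hdc hdc'))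

lemma exists_atom_images_of_atomless {B C D : Type*} [BooleanAlgebra B] [BooleanAlgebra C]
    [BooleanAlgebra D] [Finite C] [Finite D] (hB : ∀ b : B, ¬IsAtom b)
    (f : BoundedLatticeHom C D) (hf : Injective f) (χ : BoundedLatticeHom C B) (hχ : Injective χ) :
    ∃ p : D → B, (∀ d, IsAtom d → p d ≠ ⊥) ∧ {d : D | IsAtom d}.PairwiseDisjoint p ∧
      ∀ c, IsAtom c → (atomsBelow (f c)).sup p = χ c := by
  classical
  choose! π hπ hdπ using fun d (hd : IsAtom d) => exists_isAtom_le_map f hd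
  have hπ_eq : ∀ d c, IsAtom d → IsAtom c → d ≤ f c → π d = c := fun d c hd hc hdc =>
    eq_of_le_map_of_le_map f hd (hπ d hd) hc (hdπ d hd) hdc
  have hmem : ∀ d, IsAtom d → d ∈ atomsBelow (f (π d)) := fun d hd =>
    mem_atomsBelow.2 ⟨hd, hdπ d hd⟩
  choose! q hq0 hqd hqs using fun c (hc : IsAtom c) =>
    exists_pairwiseDisjoint_sup_eq hB (atomsBelow_nonempty ((hf.ne_iff' (map_bot f)).2 hc.ne_bot))
      ((hχ.ne_iff' (map_bot χ)).2 hc.ne_bot)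
  have hq_le : ∀ d, IsAtom d → q (π d) d ≤ χ (π d) := fun d hd =>
    hqs (π d) (hπ d hd) ▸ Finset.le_sup (hmem d hd)
  refine ⟨fun d => q (π d) d, fun d hd => hq0 _ (hπ d hd) d (hmem d hd), ?_, fun c hc => ?_⟩
  · intro d hd d' hd' hne
    by_cases h : π d = π d'
    · have hd'mem : d' ∈ atomsBelow (f (π d)) := h ▸ hmem d' hd'
      change Disjoint (q (π d) d) (q (π d') d')
      rw [← h]
      exact hqd (π d) (hπ d hd) (hmem d hd) hd'mem hne
    · exact (((hπ d hd).disjoint_of_ne (hπ d' hd') h).map χ).mono (hq_le d hd) (hq_le d' hd')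
  · rw [← hqs c hc]
    exact Finset.sup_congr rfl fun d hd => by
      rw [hπ_eq d c (mem_atomsBelow.1 hd).1 hc (mem_atomsBelow.1 hd).2]

theorem BoundedLatticeHom.exists_injective_comp_eq_of_atomless {B C D : Type*} [BooleanAlgebra B]
    [BooleanAlgebra C] [BooleanAlgebra D] [Finite C] [Finite D] (hB : ∀ b : B, ¬IsAtom b)
    (f : BoundedLatticeHom C D) (χ : BoundedLatticeHom C B) (hf : Injective f) (hχ : Injective χ) :
    ∃ u : BoundedLatticeHom D B, Injective u ∧ ∀ c, u (f c) = χ c := by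
  obtain ⟨p, hp0, hp, hpχ⟩ := exists_atom_images_of_atomless hB f hf χ hχ
  have hcomp : ∀ c, SupBotHom.ofAtoms p (f c) = χ c :=
    apply_eq_apply_of_forall_isAtom (g := (SupBotHom.ofAtoms p).comp f.toSupBotHom) hpχ
  refine ⟨{ toFun := SupBotHom.ofAtoms p
            map_sup' := map_sup _
            map_inf' := SupBotHom.ofAtoms_inf hp
            map_top' := by simpa using hcomp ⊤
            map_bot' := map_bot _ },
    SupBotHom.ofAtoms_injective hp hp0, hcomp⟩

lemma BooleanSubalgebra.exists_finite_mem {B : Type*} [BooleanAlgebra B] (b : B) :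
    ∃ L : BooleanSubalgebra B, Finite L ∧ b ∈ L := by
  refine ⟨{ carrier := {⊥, b, bᶜ, ⊤}
            supClosed' := by rintro x (rfl | rfl | rfl | rfl) y (rfl | rfl | rfl | rfl) <;> simp
            infClosed' := by rintro x (rfl | rfl | rfl | rfl) y (rfl | rfl | rfl | rfl) <;> simp
            bot_mem' := by simp
            compl_mem' := by rintro x (rfl | rfl | rfl | rfl) <;> simp },
    (Set.toFinite {⊥, b, bᶜ, ⊤}).to_subtype, Set.mem_insert_of_mem _ (Set.mem_insert b _)⟩

def BoundedLatticeHom.diag (α : Type*) [Lattice α] [BoundedOrder α] :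
    BoundedLatticeHom α (α × α) where
  toFun x := (x, x)
  map_sup' _ _ := rfl
  map_inf' _ _ := rfl
  map_top' := rfl
  map_bot' := rfl

lemma BoundedLatticeHom.not_isAtom_apply_diag {α β : Type*} [Lattice α] [BoundedOrder α]
    [Lattice β] [BoundedOrder β] (u : BoundedLatticeHom (α × α) β) (hu : Injective u) {c : α}
    (hc : c ≠ ⊥) : ¬IsAtom (u (c, c)) := by
  intro h
  have hu_eq : ∀ x, x ≤ (c, c) → x ≠ ⊥ → u x = u (c, c) := fun x hx hx0 =>
    (h.le_iff_eq ((hu.ne_iff' (map_bot u)).2 hx0)).1 (OrderHomClass.mono u hx)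
  have hswap : ((c, ⊥) : α × α) = (⊥, c) :=
    hu ((hu_eq (c, ⊥) ⟨le_rfl, bot_le⟩ fun h => hc (congrArg Prod.fst h)).trans
      (hu_eq (⊥, c) ⟨bot_le, le_rfl⟩ fun h => hc (congrArg Prod.snd h)).symm)
  exact hc (congrArg Prod.fst hswap)

/-- A Boolean algebra is atomless if and only if it is homogeneous with respect to
injective bounded lattice homomorphisms from finite Boolean algebras: for all
finite Boolean algebras `C`, `D`, every injective bounded lattice homomorphism
`f : C → D` and every injective bounded lattice homomorphism `χ : C → B` admit an
injective bounded lattice homomorphism `u : D → B` with `u ∘ f = χ`. -/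
theorem atomless_iff_homogeneous (B : Type u) [BooleanAlgebra B] :
    (∀ b : B, ¬ IsAtom b) ↔
      ∀ (C D : Type u) [BooleanAlgebra C] [BooleanAlgebra D] [Finite C] [Finite D],
        ∀ (f : BoundedLatticeHom C D) (χ : BoundedLatticeHom C B),
          Function.Injective f → Function.Injective χ →
            ∃ u : BoundedLatticeHom D B,
              Function.Injective u ∧ ∀ c, u (f c) = χ c := by
  refine ⟨fun hB C D _ _ _ _ => BoundedLatticeHom.exists_injective_comp_eq_of_atomless hB,
    fun H b hb => ?_⟩
  obtain ⟨L, hL, hbL⟩ := BooleanSubalgebra.exists_finite_mem b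
  obtain ⟨u, hu, hu_diag⟩ := H L (L × L) (BoundedLatticeHom.diag L) L.subtype
    (fun _ _ h => congrArg Prod.fst h) L.subtype_injective
  exact u.not_isAtom_apply_diag hu (c := ⟨b, hbL⟩) (fun h => hb.ne_bot (congrArg Subtype.val h))
    ((hu_diag ⟨b, hbL⟩).symm ▸ hb)
end
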